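/- Given effective noise variance N(β, c) = |β|² + S||β g + E* c - a||² (with S > 0, a ∈ ℂ^L, g orthogonal to columns of E*), the maximum over β, c of log⁺(S/N(β,c)) equals log⁺(1/(a* V a)) where V = I - gg*/(1/S + ||g||²) - E*(EE*)⁻¹E, provided a* V a > 0. -/

import Mathlib

/-!
Let `P = E*(EE*)⁻¹E`, the orthogonal projection onto the range of `E*`; then `E (I - P) = 0`, so
`g = (I - P) h` is orthogonal to that range. Writing `a = (I - P) a + E* c₀` with
`c₀ = (EE*)⁻¹ E a`, the residual `β g + E* c - a` is the orthogonal sum of `β g - (I - P) a` and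
`E* (c - c₀)`, and completing the square in `β` gives
`N(β, c) = (1 + S‖g‖²) |β - β₀|² + S ‖E* (c - c₀)‖² + S · a* V a`, `β₀ = g* a / (1/S + ‖g‖²)`.
Hence `min N = S · a* V a > 0`, attained at `(β₀, c₀)`, and `x ↦ log⁺ (S / x)` is antitone.
-/

open Matrix

noncomputable def nsq {L : ℕ} (v : Fin L → ℂ) : ℝ := ∑ i, ‖v i‖ ^ 2

/-- log⁺(x) = max(log x, 0). -/
noncomputable def logPlus (x : ℝ) : ℝ := max (Real.log x) 0

/-- Effective noise variance N(β, c) = |β|² + S‖β g + E* c - a‖². -/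
noncomputable def N16 {k L : ℕ} (S : ℝ) (g a : Fin L → ℂ)
    (E : Matrix (Fin k) (Fin L) ℂ) (β : ℂ) (c : Fin k → ℂ) : ℝ :=
  ‖β‖ ^ 2 + S * nsq (β • g + Eᴴ *ᵥ c - a)

open RCLike
open scoped InnerProductSpace ComplexConjugate

section InnerProductSpace

variable {𝕜 X : Type*} [RCLike 𝕜] [NormedAddCommGroup X] [InnerProductSpace 𝕜 X]

theorem norm_sq_add_mul_norm_smul_sub_sq {S : ℝ} (hS : 0 < S) (g b : X) (β : 𝕜) :
    ‖β‖ ^ 2 + S * ‖β • g - b‖ ^ 2 =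
      (1 + S * ‖g‖ ^ 2) * ‖β - ⟪g, b⟫_𝕜 / ((1 / S + ‖g‖ ^ 2 : ℝ) : 𝕜)‖ ^ 2
        + S * (‖b‖ ^ 2 - ‖⟪g, b⟫_𝕜‖ ^ 2 / (1 / S + ‖g‖ ^ 2)) := by
  have ht : 0 < 1 / S + ‖g‖ ^ 2 := by positivity
  have hre : re ⟪β, ⟪g, b⟫_𝕜 / ((1 / S + ‖g‖ ^ 2 : ℝ) : 𝕜)⟫_𝕜
      = re (conj β * ⟪g, b⟫_𝕜) / (1 / S + ‖g‖ ^ 2) := by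
    rw [RCLike.inner_apply, mul_comm, ← mul_div_assoc, div_re_ofReal]
  rw [norm_sub_sq (𝕜 := 𝕜), norm_sub_sq (𝕜 := 𝕜), inner_smul_left, norm_smul, hre, norm_div,
    norm_ofReal, abs_of_pos ht]
  field_simp
  ring

end InnerProductSpace

section Matrix

variable {m n R : Type*} [Fintype m] [Fintype n] [CommRing R] [StarRing R]

theorem star_dotProduct_conjTranspose_mulVec (E : Matrix m n R) (x : n → R) (e : m → R) :
    star x ⬝ᵥ (Eᴴ *ᵥ e) = star (E *ᵥ x) ⬝ᵥ e := by
  rw [star_mulVec, dotProduct_mulVec]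

variable [DecidableEq m] [DecidableEq n]

theorem mul_one_sub_conjTranspose_mul_inv_mul (E : Matrix m n R) [Invertible (E * Eᴴ)] :
    E * (1 - Eᴴ * (E * Eᴴ)⁻¹ * E) = 0 := by
  rw [Matrix.mul_sub, Matrix.mul_one, ← Matrix.mul_assoc, ← Matrix.mul_assoc,
    Matrix.mul_inv_of_invertible, Matrix.one_mul, sub_self]

theorem mulVec_one_sub_conjTranspose_mul_inv_mul_eq_zero (E : Matrix m n R)
    [Invertible (E * Eᴴ)] (x : n → R) : E *ᵥ ((1 - Eᴴ * (E * Eᴴ)⁻¹ * E) *ᵥ x) = 0 := by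
  rw [mulVec_mulVec, mul_one_sub_conjTranspose_mul_inv_mul, zero_mulVec]

theorem one_sub_conjTranspose_mul_inv_mul_mulVec_add (E : Matrix m n R) (x : n → R) :
    (1 - Eᴴ * (E * Eᴴ)⁻¹ * E) *ᵥ x + Eᴴ *ᵥ ((E * Eᴴ)⁻¹ *ᵥ (E *ᵥ x)) = x := by
  simp [sub_mulVec, mulVec_mulVec, Matrix.mul_assoc]

end Matrix

section EuclideanSpace

variable {L : ℕ}

theorem nsq_eq_norm_sq (v : Fin L → ℂ) : nsq v = ‖WithLp.toLp 2 v‖ ^ 2 := by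
  rw [EuclideanSpace.norm_sq_eq]
  rfl

theorem star_dotProduct_eq_inner (x y : Fin L → ℂ) :
    star x ⬝ᵥ y = ⟪WithLp.toLp 2 x, WithLp.toLp 2 y⟫_ℂ := by
  rw [EuclideanSpace.inner_toLp_toLp, dotProduct_comm]

theorem nsq_add_of_star_dotProduct_eq_zero {x y : Fin L → ℂ} (h : star x ⬝ᵥ y = 0) :
    nsq (x + y) = nsq x + nsq y := by
  rw [star_dotProduct_eq_inner] at h
  simp only [nsq_eq_norm_sq, WithLp.toLp_add, sq]
  exact norm_add_sq_eq_norm_sq_add_norm_sq_of_inner_eq_zero _ _ h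

theorem re_star_dotProduct_self (x : Fin L → ℂ) : (star x ⬝ᵥ x).re = nsq x := by
  rw [star_dotProduct_eq_inner, nsq_eq_norm_sq, ← inner_self_eq_norm_sq (𝕜 := ℂ)]
  rfl

end EuclideanSpace

section NoiseVariance

variable {k L : ℕ}

theorem re_star_dotProduct_mulVec_eq_nsq_sub (t : ℝ) (g a : Fin L → ℂ)
    (E : Matrix (Fin k) (Fin L) ℂ) [Invertible (E * Eᴴ)] :
    (star a ⬝ᵥ ((1 - (t : ℂ)⁻¹ • vecMulVec g (star g) - Eᴴ * (E * Eᴴ)⁻¹ * E) *ᵥ a)).re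
      = nsq ((1 - Eᴴ * (E * Eᴴ)⁻¹ * E) *ᵥ a) - ‖star g ⬝ᵥ a‖ ^ 2 / t := by
  set b := (1 - Eᴴ * (E * Eᴴ)⁻¹ * E) *ᵥ a
  have ha : a = b + Eᴴ *ᵥ ((E * Eᴴ)⁻¹ *ᵥ (E *ᵥ a)) :=
    (one_sub_conjTranspose_mul_inv_mul_mulVec_add E a).symm
  have hEb : E *ᵥ b = 0 := mulVec_one_sub_conjTranspose_mul_inv_mul_eq_zero E a
  have hab : star a ⬝ᵥ b = star b ⬝ᵥ b := by
    conv_lhs => rw [ha]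
    rw [star_add, add_dotProduct, star_dotProduct (Eᴴ *ᵥ _), star_dotProduct_conjTranspose_mulVec,
      hEb]
    simp
  have hVa : (1 - (t : ℂ)⁻¹ • vecMulVec g (star g) - Eᴴ * (E * Eᴴ)⁻¹ * E) *ᵥ a
      = b - ((t : ℂ)⁻¹ * (star g ⬝ᵥ a)) • g := by
    rw [sub_mulVec, sub_mulVec, smul_mulVec, vecMulVec_mulVec, op_smul_eq_smul, smul_smul]
    simp only [b, sub_mulVec, one_mulVec]
    abel
  rw [hVa, dotProduct_sub, dotProduct_smul, hab, star_dotProduct a g, smul_eq_mul, mul_assoc,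
    Complex.star_def, Complex.mul_conj, Complex.normSq_eq_norm_sq, ← Complex.ofReal_inv,
    ← Complex.ofReal_mul, Complex.sub_re, Complex.ofReal_re, re_star_dotProduct_self,
    div_eq_inv_mul]

theorem N16_eq_complete_square {S : ℝ} (hS : 0 < S) {g : Fin L → ℂ} (a : Fin L → ℂ)
    {E : Matrix (Fin k) (Fin L) ℂ} [Invertible (E * Eᴴ)] (hEg : E *ᵥ g = 0) (β : ℂ)
    (c : Fin k → ℂ) :
    N16 S g a E β c =
      (1 + S * nsq g) * ‖β - (star g ⬝ᵥ a) / ((1 / S + nsq g : ℝ) : ℂ)‖ ^ 2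
        + S * nsq (Eᴴ *ᵥ (c - (E * Eᴴ)⁻¹ *ᵥ (E *ᵥ a)))
        + S * (nsq ((1 - Eᴴ * (E * Eᴴ)⁻¹ * E) *ᵥ a) - ‖star g ⬝ᵥ a‖ ^ 2 / (1 / S + nsq g)) := by
  set c₀ := (E * Eᴴ)⁻¹ *ᵥ (E *ᵥ a)
  set b := (1 - Eᴴ * (E * Eᴴ)⁻¹ * E) *ᵥ a
  have ha : a = b + Eᴴ *ᵥ c₀ := (one_sub_conjTranspose_mul_inv_mul_mulVec_add E a).symm
  have hEb : E *ᵥ b = 0 := mulVec_one_sub_conjTranspose_mul_inv_mul_eq_zero E a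
  have hgb : star g ⬝ᵥ b = star g ⬝ᵥ a := by
    conv_rhs => rw [ha]
    rw [dotProduct_add, star_dotProduct_conjTranspose_mulVec, hEg]
    simp
  have hsplit : β • g + Eᴴ *ᵥ c - a = (β • g - b) + Eᴴ *ᵥ (c - c₀) := by
    conv_lhs => rw [ha]
    rw [mulVec_sub]
    abel
  have horth : star (β • g - b) ⬝ᵥ (Eᴴ *ᵥ (c - c₀)) = 0 := by
    rw [star_dotProduct_conjTranspose_mulVec, mulVec_sub, mulVec_smul, hEg, hEb]
    simp
  rw [N16, hsplit, nsq_add_of_star_dotProduct_eq_zero horth, ← hgb]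
  simp only [nsq_eq_norm_sq, star_dotProduct_eq_inner, WithLp.toLp_sub, WithLp.toLp_smul]
  rw [mul_add, ← add_assoc, norm_sq_add_mul_norm_smul_sub_sq hS]
  simp only [RCLike.ofReal_eq_complex_ofReal]
  ring

theorem isLeast_range_N16 {S : ℝ} (hS : 0 < S) {g : Fin L → ℂ} (a : Fin L → ℂ)
    {E : Matrix (Fin k) (Fin L) ℂ} [Invertible (E * Eᴴ)] (hEg : E *ᵥ g = 0) :
    IsLeast (Set.range fun p : ℂ × (Fin k → ℂ) => N16 S g a E p.1 p.2)
      (S * (star a ⬝ᵥ ((1 - (((1 / S + nsq g : ℝ)) : ℂ)⁻¹ • vecMulVec g (star g)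
        - Eᴴ * (E * Eᴴ)⁻¹ * E) *ᵥ a)).re) := by
  rw [re_star_dotProduct_mulVec_eq_nsq_sub]
  constructor
  · refine ⟨((star g ⬝ᵥ a) / ((1 / S + nsq g : ℝ) : ℂ), (E * Eᴴ)⁻¹ *ᵥ (E *ᵥ a)), ?_⟩
    simp [N16_eq_complete_square hS a hEg, nsq]
  · rintro _ ⟨⟨β, c⟩, rfl⟩
    dsimp only
    rw [N16_eq_complete_square hS a hEg]
    simp only [nsq_eq_norm_sq]
    exact le_add_of_nonneg_left (by positivity)

end NoiseVariance

theorem logPlus_eq_posLog : logPlus = Real.posLog :=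
  funext fun _ => max_comm _ _

theorem isGreatest_image_logPlus_div {s : Set ℝ} {S m : ℝ} (hS : 0 < S) (hm : 0 < m)
    (h : IsLeast s m) : IsGreatest ((fun x => logPlus (S / x)) '' s) (logPlus (S / m)) := by
  refine AntitoneOn.map_isLeast (fun x hx y _ hxy => ?_) h
  have hx0 : 0 < x := hm.trans_le (h.2 hx)
  rw [logPlus_eq_posLog]
  exact Real.posLog_le_posLog (div_nonneg hS.le (hx0.trans_le hxy).le)
    (div_le_div_of_nonneg_left hS.le hx0 hxy)

/-- The maximum over β, c of log⁺(S/N(β,c)) equals log⁺(1/(a* V a)), where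
V = I - gg*/(1/S + ‖g‖²) - E*(EE*)⁻¹E and g = (I - E*(EE*)⁻¹E)h,
provided a* V a > 0. -/
theorem stmt16 {k L : ℕ} {S : ℝ} (hS : 0 < S) (a h : Fin L → ℂ)
    (E : Matrix (Fin k) (Fin L) ℂ) [Invertible (E * Eᴴ)]
    (g : Fin L → ℂ) (hg : g = (1 - Eᴴ * (E * Eᴴ)⁻¹ * E) *ᵥ h)
    (V : Matrix (Fin L) (Fin L) ℂ)
    (hV : V = 1 - (((1 / S + nsq g : ℝ)) : ℂ)⁻¹ • vecMulVec g (star g)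
        - Eᴴ * (E * Eᴴ)⁻¹ * E)
    (hpos : 0 < (star a ⬝ᵥ (V *ᵥ a)).re) :
    IsGreatest
      {x : ℝ | ∃ (β : ℂ) (c : Fin k → ℂ), x = logPlus (S / N16 S g a E β c)}
      (logPlus (1 / (star a ⬝ᵥ (V *ᵥ a)).re)) := by
  have hEg : E *ᵥ g = 0 := hg ▸ mulVec_one_sub_conjTranspose_mul_inv_mul_eq_zero E h
  have hleast := isLeast_range_N16 hS a hEg
  rw [← hV] at hleast
  have key := isGreatest_image_logPlus_div hS (mul_pos hS hpos) hleast
  rw [div_mul_cancel_left₀ hS.ne', ← one_div] at key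
  convert key using 1
  ext x
  simp [eq_comm]
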